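/- Let B > 0. For each T ∈ ℕ, let φ̂_T², ψ̂_T², δ̂_T² be nonnegative random variables on a probability space with φ̂_T² ≤ δ̂_T² and ψ̂_T² ≤ δ̂_T² almost surely, and let φ_T², ψ_T², δ_T² be nonnegative constants with φ_T² + ψ_T² = δ_T² and δ_T² ≤ B. Assume E[(φ̂_T² − φ_T²)²] → 0, E[(ψ̂_T² − ψ_T²)²] → 0, and E[(δ̂_T² − δ_T²)²] → 0 as T → ∞. Then E[| φ̂_T²·ψ̂_T²/δ̂_T² − φ_T²·ψ_T²/δ_T² |] → 0 as T → ∞, where quotients are interpreted as 0 whenever their denominators are 0. -/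

import Mathlib

/-!
The map `(a, b, d) ↦ a b / d` is 1-Lipschitz for the ℓ¹ norm on `{0 ≤ a, b ≤ d}`, even with the
convention `x / 0 = 0`; and `φ² + ψ² = δ²` puts the constants in that region. So the L¹ error of
the estimated loss is at most the sum of the L¹ errors of `φ̂², ψ̂², δ̂²`, and each of those is at
most the square root of the corresponding L² error, since `|X|` has nonnegative variance.
-/

open MeasureTheory ProbabilityTheory Filter Topology

lemma abs_mul_div_le_abs_of_le {x y z : ℝ} (hy : 0 ≤ y) (hyz : y ≤ z) : |x * y / z| ≤ |x| := by
  have hyz' : y / z ≤ 1 := div_le_one_of_le₀ hyz (hy.trans hyz)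
  rw [mul_div_assoc, abs_mul, abs_of_nonneg (div_nonneg hy (hy.trans hyz))]
  exact mul_le_of_le_one_right (abs_nonneg x) hyz'

lemma abs_mul_div_sub_mul_div_le {a b d p q s : ℝ} (ha : 0 ≤ a) (hb : 0 ≤ b) (had : a ≤ d)
    (hbd : b ≤ d) (hp : 0 ≤ p) (hq : 0 ≤ q) (hps : p ≤ s) (hqs : q ≤ s) :
    |a * b / d - p * q / s| ≤ |a - p| + |b - q| + |d - s| := by
  wlog hds : d ≤ s generalizing a b d p q s
  · have := this hp hq hps hqs ha hb had hbd (le_of_not_ge hds)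
    rwa [abs_sub_comm, abs_sub_comm p, abs_sub_comm q, abs_sub_comm s] at this
  rcases (ha.trans had).eq_or_lt with hd | hd
  · obtain rfl : a = 0 := le_antisymm (hd ▸ had) ha
    obtain rfl : b = 0 := le_antisymm (hd ▸ hbd) hb
    subst hd
    have := abs_mul_div_le_abs_of_le (x := p) hq hqs
    simp only [zero_mul, zero_div, zero_sub, abs_neg] at this ⊢
    linarith [abs_nonneg q, abs_nonneg s]
  have hs : 0 < s := hd.trans_le hds
  have hab : a * b / d ≤ s := (div_le_of_le_mul₀ hd.le (ha.trans had) (by nlinarith)).trans hds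
  have key : a * b / d - p * q / s =
      (a - p) * q / s + (b - q) * a / s + (s - d) * (a * b / d) / s := by
    field_simp
    ring
  calc |a * b / d - p * q / s|
      ≤ |(a - p) * q / s| + |(b - q) * a / s| + |(s - d) * (a * b / d) / s| := by
        rw [key]; exact abs_add_three _ _ _
    _ ≤ |a - p| + |b - q| + |d - s| := by
        rw [abs_sub_comm d s]
        exact add_le_add (add_le_add (abs_mul_div_le_abs_of_le hq hqs)
          (abs_mul_div_le_abs_of_le ha (had.trans hds)))
          (abs_mul_div_le_abs_of_le (by positivity) hab)

section Moments

variable {Ω : Type*} [MeasurableSpace Ω] {μ : Measure Ω} [IsProbabilityMeasure μ]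

lemma integral_abs_le_sqrt_integral_sq {X : Ω → ℝ} (hX : MemLp X 2 μ) :
    ∫ ω, |X ω| ∂μ ≤ √(∫ ω, X ω ^ 2 ∂μ) := by
  have hvar := variance_nonneg |X| μ
  rw [variance_eq_sub hX.abs] at hvar
  simp only [Pi.pow_apply, Pi.abs_apply, sq_abs] at hvar
  exact (le_abs_self _).trans (Real.abs_le_sqrt (by linarith))

lemma tendsto_integral_abs_of_tendsto_integral_sq {ι : Type*} {l : Filter ι} {X : ι → Ω → ℝ}
    (hX : ∀ i, MemLp (X i) 2 μ) (h : Tendsto (fun i => ∫ ω, X i ω ^ 2 ∂μ) l (𝓝 0)) :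
    Tendsto (fun i => ∫ ω, |X i ω| ∂μ) l (𝓝 0) := by
  have hsqrt : Tendsto (fun i => √(∫ ω, X i ω ^ 2 ∂μ)) l (𝓝 0) := by
    simpa using h.sqrt
  exact squeeze_zero (fun i => integral_nonneg fun ω => abs_nonneg _)
    (fun i => integral_abs_le_sqrt_integral_sq (hX i)) hsqrt

end Moments

theorem stmt11_general {Ω : Type*} [MeasurableSpace Ω] (μ : Measure Ω) [IsProbabilityMeasure μ]
    (φhat ψhat δhat : ℕ → Ω → ℝ) (φsq ψsq δsq : ℕ → ℝ)
    (hφNN : ∀ T, ∀ᵐ ω ∂μ, 0 ≤ φhat T ω) (hψNN : ∀ T, ∀ᵐ ω ∂μ, 0 ≤ ψhat T ω)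
    (hφle : ∀ T, ∀ᵐ ω ∂μ, φhat T ω ≤ δhat T ω)
    (hψle : ∀ T, ∀ᵐ ω ∂μ, ψhat T ω ≤ δhat T ω)
    (hconstNN : ∀ T, 0 ≤ φsq T ∧ 0 ≤ ψsq T ∧ 0 ≤ δsq T)
    (hsum : ∀ T, φsq T + ψsq T = δsq T)
    (hL2φ : ∀ T, MemLp (φhat T) 2 μ) (hL2ψ : ∀ T, MemLp (ψhat T) 2 μ)
    (hL2δ : ∀ T, MemLp (δhat T) 2 μ)
    (hφ : Tendsto (fun T => ∫ ω, (φhat T ω - φsq T) ^ 2 ∂μ) atTop (nhds 0))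
    (hψ : Tendsto (fun T => ∫ ω, (ψhat T ω - ψsq T) ^ 2 ∂μ) atTop (nhds 0))
    (hδ : Tendsto (fun T => ∫ ω, (δhat T ω - δsq T) ^ 2 ∂μ) atTop (nhds 0)) :
    Tendsto
      (fun T => ∫ ω,
        |φhat T ω * ψhat T ω / δhat T ω - φsq T * ψsq T / δsq T| ∂μ)
      atTop (nhds 0) := by
  have hMφ T : MemLp (fun ω => φhat T ω - φsq T) 2 μ := (hL2φ T).sub (memLp_const _)
  have hMψ T : MemLp (fun ω => ψhat T ω - ψsq T) 2 μ := (hL2ψ T).sub (memLp_const _)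
  have hMδ T : MemLp (fun ω => δhat T ω - δsq T) 2 μ := (hL2δ T).sub (memLp_const _)
  have hL1 := ((tendsto_integral_abs_of_tendsto_integral_sq hMφ hφ).add
    (tendsto_integral_abs_of_tendsto_integral_sq hMψ hψ)).add
    (tendsto_integral_abs_of_tendsto_integral_sq hMδ hδ)
  rw [add_zero, add_zero] at hL1
  refine squeeze_zero (fun T => integral_nonneg fun ω => abs_nonneg _) (fun T => ?_) hL1
  have hIφ := ((hMφ T).integrable one_le_two).abs
  have hIψ := ((hMψ T).integrable one_le_two).abs
  have hIδ := ((hMδ T).integrable one_le_two).abs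
  have hbound : ∀ᵐ ω ∂μ, |φhat T ω * ψhat T ω / δhat T ω - φsq T * ψsq T / δsq T| ≤
      |φhat T ω - φsq T| + |ψhat T ω - ψsq T| + |δhat T ω - δsq T| := by
    obtain ⟨hp, hq, -⟩ := hconstNN T
    filter_upwards [hφNN T, hψNN T, hφle T, hψle T] with ω ha hb had hbd
    exact abs_mul_div_sub_mul_div_le ha hb had hbd hp hq (by linarith [hsum T])
      (by linarith [hsum T])
  calc _ ≤ ∫ ω, (|φhat T ω - φsq T| + |ψhat T ω - ψsq T| + |δhat T ω - δsq T|) ∂μ :=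
        integral_mono_of_nonneg (ae_of_all _ fun ω => abs_nonneg _)
          ((hIφ.fun_add hIψ).fun_add hIδ) hbound
    _ = _ := by rw [integral_add (hIφ.fun_add hIψ) hIδ, integral_add hIφ hIψ]

/-- Lemma A.2 of the supplementary material.
With nonnegative random variables `φ̂_T², ψ̂_T² ≤ δ̂_T²` (a.s.) and nonnegative
constants `φ_T² + ψ_T² = δ_T² ≤ B`, L²-consistency of the three sample
parameters implies L¹-consistency of the estimated minimum loss:
`E[|φ̂_T²ψ̂_T²/δ̂_T² − φ_T²ψ_T²/δ_T²|] → 0` (quotients are `0` when the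
denominator vanishes, Lean's division-by-zero convention). -/
theorem stmt11 {Ω : Type*} [MeasurableSpace Ω] (μ : Measure Ω) [IsProbabilityMeasure μ]
    (B : ℝ) (hB : 0 < B)
    (φhat ψhat δhat : ℕ → Ω → ℝ) (φsq ψsq δsq : ℕ → ℝ)
    (hmeasφ : ∀ T, Measurable (φhat T)) (hmeasψ : ∀ T, Measurable (ψhat T))
    (hmeasδ : ∀ T, Measurable (δhat T))
    (hφNN : ∀ T, ∀ᵐ ω ∂μ, 0 ≤ φhat T ω) (hψNN : ∀ T, ∀ᵐ ω ∂μ, 0 ≤ ψhat T ω)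
    (hδNN : ∀ T, ∀ᵐ ω ∂μ, 0 ≤ δhat T ω)
    (hφle : ∀ T, ∀ᵐ ω ∂μ, φhat T ω ≤ δhat T ω)
    (hψle : ∀ T, ∀ᵐ ω ∂μ, ψhat T ω ≤ δhat T ω)
    (hconstNN : ∀ T, 0 ≤ φsq T ∧ 0 ≤ ψsq T ∧ 0 ≤ δsq T)
    (hsum : ∀ T, φsq T + ψsq T = δsq T) (hbd : ∀ T, δsq T ≤ B)
    (hL2φ : ∀ T, MemLp (φhat T) 2 μ) (hL2ψ : ∀ T, MemLp (ψhat T) 2 μ)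
    (hL2δ : ∀ T, MemLp (δhat T) 2 μ)
    (hφ : Tendsto (fun T => ∫ ω, (φhat T ω - φsq T) ^ 2 ∂μ) atTop (nhds 0))
    (hψ : Tendsto (fun T => ∫ ω, (ψhat T ω - ψsq T) ^ 2 ∂μ) atTop (nhds 0))
    (hδ : Tendsto (fun T => ∫ ω, (δhat T ω - δsq T) ^ 2 ∂μ) atTop (nhds 0)) :
    Tendsto
      (fun T => ∫ ω,
        |φhat T ω * ψhat T ω / δhat T ω - φsq T * ψsq T / δsq T| ∂μ)
      atTop (nhds 0) :=
  stmt11_general μ φhat ψhat δhat φsq ψsq δsq hφNN hψNN hφle hψle hconstNN hsum hL2φ hL2ψ hL2δ hφ hψ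
    hδ
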